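/- Let h be an Euler element of 𝔤. Then 𝔫_h^♮ := ℝh + 𝔤₁(h) + 𝔤₋₁(h) + [𝔤₁(h), 𝔤₋₁(h)] is a Lie ideal of 𝔤 containing h, and it is contained in every Lie ideal of 𝔤 that contains h; thus 𝔫_h^♮ is the minimal Lie ideal of 𝔤 containing h. -/
import Mathlib


/-- The `ν`-eigenspace `𝔤_ν(h) = ker(ad h − ν·id)` of `ad h`. -/
noncomputable def adEig {L : Type*} [LieRing L] [LieAlgebra ℝ L] (h : L) (ν : ℝ) :
    Submodule ℝ L :=
  Module.End.eigenspace (LieAlgebra.ad ℝ L h) ν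

/-- For subspaces `a`, `b` of `𝔤`, `[a,b]` is the linear span of all brackets
`⁅x,y⁆` with `x ∈ a`, `y ∈ b`. -/
def bracketSpan {L : Type*} [LieRing L] [LieAlgebra ℝ L] (a b : Submodule ℝ L) :
    Submodule ℝ L :=
  Submodule.span ℝ {z : L | ∃ x ∈ a, ∃ y ∈ b, z = ⁅x, y⁆}

/-- `h` is an Euler element: `ad h ≠ 0` and `ad h` is diagonalizable with all
eigenvalues in `{−1,0,1}`. -/
def IsEulerElement {L : Type*} [LieRing L] [LieAlgebra ℝ L] (h : L) : Prop :=
  LieAlgebra.ad ℝ L h ≠ 0 ∧ adEig h 1 ⊔ adEig h 0 ⊔ adEig h (-1) = ⊤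

/-- A submodule is a Lie ideal if it absorbs brackets. -/
def IsLieIdealSub {L : Type*} [LieRing L] [LieAlgebra ℝ L] (I : Submodule ℝ L) : Prop :=
  ∀ x : L, ∀ y ∈ I, ⁅x, y⁆ ∈ I

/-- `𝔫_h^♮ := ℝh + 𝔤₁(h) + 𝔤₋₁(h) + [𝔤₁(h), 𝔤₋₁(h)]`. -/
noncomputable def eulerIdealSharp {L : Type*} [LieRing L] [LieAlgebra ℝ L] (h : L) :
    Submodule ℝ L :=
  Submodule.span ℝ {h} ⊔ adEig h 1 ⊔ adEig h (-1) ⊔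
    bracketSpan (adEig h 1) (adEig h (-1))

section Aux

variable {L : Type*} [LieRing L] [LieAlgebra ℝ L]

lemma adEig_mem_iff {h x : L} {ν : ℝ} : x ∈ adEig h ν ↔ ⁅h, x⁆ = ν • x := by
  rw [adEig, Module.End.mem_eigenspace_iff]; rfl

lemma adEig_bracket {h x y : L} {a b : ℝ} (hx : x ∈ adEig h a) (hy : y ∈ adEig h b) :
    ⁅x, y⁆ ∈ adEig h (a + b) := by
  rw [adEig_mem_iff] at hx hy ⊢
  rw [leibniz_lie, hx, hy, smul_lie, lie_smul, add_smul]

lemma adEig_bot {h : L} (hE : IsEulerElement h) {ν : ℝ}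
    (h1 : ν ≠ 1) (h0 : ν ≠ 0) (hm : ν ≠ -1) : adEig h ν = ⊥ := by
  have hind := Module.End.eigenspaces_iSupIndep (LieAlgebra.ad ℝ L h)
  have hdisj := hind ν
  have hle : adEig h 1 ⊔ adEig h 0 ⊔ adEig h (-1) ≤
      ⨆ (j : ℝ) (_ : j ≠ ν), Module.End.eigenspace (LieAlgebra.ad ℝ L h) j := by
    refine sup_le (sup_le ?_ ?_) ?_
    · exact le_iSup₂ (f := fun (j : ℝ) (_ : j ≠ ν) =>
        Module.End.eigenspace (LieAlgebra.ad ℝ L h) j) 1 (Ne.symm h1)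
    · exact le_iSup₂ (f := fun (j : ℝ) (_ : j ≠ ν) =>
        Module.End.eigenspace (LieAlgebra.ad ℝ L h) j) 0 (Ne.symm h0)
    · exact le_iSup₂ (f := fun (j : ℝ) (_ : j ≠ ν) =>
        Module.End.eigenspace (LieAlgebra.ad ℝ L h) j) (-1) (Ne.symm hm)
  rw [hE.2] at hle
  exact (hdisj.mono_right hle).eq_bot_of_le le_top

lemma span_le_n (h : L) : Submodule.span ℝ {h} ≤ eulerIdealSharp h :=
  le_sup_of_le_left (le_sup_of_le_left le_sup_left)

lemma g1_le_n (h : L) : adEig h 1 ≤ eulerIdealSharp h :=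
  le_sup_of_le_left (le_sup_of_le_left le_sup_right)

lemma gm_le_n (h : L) : adEig h (-1) ≤ eulerIdealSharp h :=
  le_sup_of_le_left le_sup_right

lemma br_le_n (h : L) : bracketSpan (adEig h 1) (adEig h (-1)) ≤ eulerIdealSharp h :=
  le_sup_right

lemma br_le_g0 (h : L) : bracketSpan (adEig h 1) (adEig h (-1)) ≤ adEig h 0 := by
  rw [bracketSpan, Submodule.span_le]
  rintro z ⟨x, hx, y, hy, rfl⟩
  have := adEig_bracket hx hy
  norm_num at this
  exact this

lemma h_mem_g0 (h : L) : h ∈ adEig h 0 := by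
  rw [adEig_mem_iff, lie_self, zero_smul]

/-- Key closure: for `x` in an eigenspace with eigenvalue `a ∈ {1,0,-1}`,
bracketing with `x` preserves `𝔫_h^♮`. -/
lemma key {h x : L} (hE : IsEulerElement h) {a : ℝ}
    (ha : a = 1 ∨ a = 0 ∨ a = -1) (hx : x ∈ adEig h a) :
    eulerIdealSharp h ≤ (eulerIdealSharp h).comap (LieAlgebra.ad ℝ L x) := by
  have hbr : ∀ y ∈ bracketSpan (adEig h 1) (adEig h (-1)), ⁅x, y⁆ ∈ eulerIdealSharp h := by
    rcases ha with rfl | rfl | rfl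
    · intro y hy
      have : ⁅x, y⁆ ∈ adEig h 1 := by
        have := adEig_bracket hx (br_le_g0 h hy); norm_num at this; exact this
      exact g1_le_n h this
    · intro y hy
      refine Submodule.span_induction ?_ ?_ ?_ ?_ hy
      · rintro z ⟨u, hu, v, hv, rfl⟩
        have e : ⁅x, ⁅u, v⁆⁆ = ⁅⁅x, u⁆, v⁆ + ⁅u, ⁅x, v⁆⁆ := leibniz_lie x u v
        rw [e]
        refine Submodule.add_mem _ ?_ ?_
        · refine br_le_n h (Submodule.subset_span ?_)
          have h1 : ⁅x, u⁆ ∈ adEig h 1 := by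
            have := adEig_bracket hx hu; norm_num at this; exact this
          exact ⟨⁅x, u⁆, h1, v, hv, rfl⟩
        · refine br_le_n h (Submodule.subset_span ?_)
          have h1 : ⁅x, v⁆ ∈ adEig h (-1) := by
            have := adEig_bracket hx hv; norm_num at this; exact this
          exact ⟨u, hu, ⁅x, v⁆, h1, rfl⟩
      · simp
      · intro u v _ _ h1 h2
        rw [lie_add]; exact Submodule.add_mem _ h1 h2
      · intro c u _ h1
        rw [lie_smul]; exact Submodule.smul_mem _ c h1
    · intro y hy
      have : ⁅x, y⁆ ∈ adEig h (-1) := by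
        have := adEig_bracket hx (br_le_g0 h hy); norm_num at this; exact this
      exact gm_le_n h this
  refine sup_le (sup_le (sup_le ?_ ?_) ?_) ?_
  · rw [Submodule.span_le]
    rintro z hz
    rw [Set.mem_singleton_iff] at hz
    simp only [SetLike.mem_coe, Submodule.mem_comap, LieAlgebra.ad_apply, hz]
    have hh : ⁅x, h⁆ = -(a • x) := by
      rw [← lie_skew, adEig_mem_iff.mp hx]
    rw [hh]
    rcases ha with rfl | rfl | rfl
    · exact Submodule.neg_mem _ (Submodule.smul_mem _ _ (g1_le_n h hx))
    · rw [zero_smul, neg_zero]; exact Submodule.zero_mem _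
    · exact Submodule.neg_mem _ (Submodule.smul_mem _ _ (gm_le_n h hx))
  · intro y hy
    simp only [Submodule.mem_comap, LieAlgebra.ad_apply]
    rcases ha with rfl | rfl | rfl
    · have h2 : ⁅x, y⁆ ∈ adEig h (2 : ℝ) := by
        have := adEig_bracket hx hy; norm_num at this; exact this
      rw [adEig_bot hE (by norm_num) (by norm_num) (by norm_num)] at h2
      rw [Submodule.mem_bot] at h2; rw [h2]; exact Submodule.zero_mem _
    · have h1 : ⁅x, y⁆ ∈ adEig h 1 := by
        have := adEig_bracket hx hy; norm_num at this; exact this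
      exact g1_le_n h h1
    · rw [← lie_skew]
      exact Submodule.neg_mem _ (br_le_n h (Submodule.subset_span ⟨y, hy, x, hx, rfl⟩))
  · intro y hy
    simp only [Submodule.mem_comap, LieAlgebra.ad_apply]
    rcases ha with rfl | rfl | rfl
    · exact br_le_n h (Submodule.subset_span ⟨x, hx, y, hy, rfl⟩)
    · have h1 : ⁅x, y⁆ ∈ adEig h (-1) := by
        have := adEig_bracket hx hy; norm_num at this; exact this
      exact gm_le_n h h1
    · have h2 : ⁅x, y⁆ ∈ adEig h (-2 : ℝ) := by
        have := adEig_bracket hx hy; norm_num at this; exact this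
      rw [adEig_bot hE (by norm_num) (by norm_num) (by norm_num)] at h2
      rw [Submodule.mem_bot] at h2; rw [h2]; exact Submodule.zero_mem _
  · intro y hy
    simp only [Submodule.mem_comap, LieAlgebra.ad_apply]
    exact hbr y hy

end Aux

/-- `𝔫_h^♮` is a Lie ideal of `𝔤` containing `h`, and it is
contained in every Lie ideal of `𝔤` containing `h`; so it is the minimal Lie
ideal containing `h`. -/
theorem eulerIdealSharp_minimal
    {L : Type*} [LieRing L] [LieAlgebra ℝ L] [FiniteDimensional ℝ L]
    (h : L) (hE : IsEulerElement h) :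
    IsLieIdealSub (eulerIdealSharp h) ∧
    h ∈ eulerIdealSharp h ∧
    (∀ I : Submodule ℝ L, IsLieIdealSub I → h ∈ I → eulerIdealSharp h ≤ I) := by
  refine ⟨?_, ?_, ?_⟩
  · intro x y hy
    have hx : x ∈ adEig h 1 ⊔ adEig h 0 ⊔ adEig h (-1) := by rw [hE.2]; trivial
    obtain ⟨u, hu, c, hc, rfl⟩ := Submodule.mem_sup.mp hx
    obtain ⟨a, ha, b, hb, rfl⟩ := Submodule.mem_sup.mp hu
    rw [add_lie, add_lie]
    refine Submodule.add_mem _ (Submodule.add_mem _ ?_ ?_) ?_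
    · exact key hE (Or.inl rfl) ha hy
    · exact key hE (Or.inr (Or.inl rfl)) hb hy
    · exact key hE (Or.inr (Or.inr rfl)) hc hy
  · exact span_le_n h (Submodule.mem_span_singleton_self h)
  · intro I hI hhI
    have g1I : adEig h 1 ≤ I := by
      intro y hy
      have h1 : ⁅h, y⁆ = (1 : ℝ) • y := adEig_mem_iff.mp hy
      rw [one_smul] at h1
      have h2 : ⁅y, h⁆ ∈ I := hI y h hhI
      have h3 : y = -⁅y, h⁆ := by rw [← lie_skew, h1, neg_neg]
      rw [h3]; exact Submodule.neg_mem _ h2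
    have gmI : adEig h (-1) ≤ I := by
      intro y hy
      have h1 : ⁅h, y⁆ = (-1 : ℝ) • y := adEig_mem_iff.mp hy
      have h2 : ⁅y, h⁆ ∈ I := hI y h hhI
      have h3 : y = ⁅y, h⁆ := by
        rw [← lie_skew, h1]; simp
      rw [h3]; exact h2
    refine sup_le (sup_le (sup_le ?_ g1I) gmI) ?_
    · rw [Submodule.span_le]; intro z hz
      rw [Set.mem_singleton_iff] at hz; subst hz; exact hhI
    · rw [bracketSpan, Submodule.span_le]
      rintro z ⟨u, hu, v, hv, rfl⟩
      exact hI u v (gmI hv)
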